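/- Let (X, =_X) be a set with an equivalence relation, 𝔽(X) the set of all =_X-preserving real-valued functions on X, and (Y, =_Y, ≠_Y; G) a completely separated set. Then for every function h : X → Y, the following are equivalent: (a) h preserves =_X (x =_X x' implies h(x) =_Y h(x')); (b) h preserves the induced equality =_{(X,𝔽(X))} and is strongly extensional with respect to ≠_{(X,𝔽(X))} and ≠_{(Y,G)} (h(x) ≠_{(Y,G)} h(x') implies x ≠_{(X,𝔽(X))} x'). In other words, the set of =_X-preserving functions X → Y coincides with the set of strongly extensional, equality-preserving functions from the free completely separated set εX := (X, =_{(X,𝔽(X))}, ≠_{(X,𝔽(X))}; 𝔽(X)) to (Y, =_Y, ≠_Y; G). -/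

import Mathlib

/-!
An `=_X`-preserving map `h` pulls every `=_Y`-preserving `g` back to an `=_X`-preserving
`g ∘ h ∈ 𝔽(X)`. Hence agreement on all of `𝔽(X)` forces agreement of `h` on all of `G`, which
is `=_Y` by tightness, and a `g ∈ G` separating `h x` from `h x'` yields `g ∘ h` separating `x`
from `x'`. Conversely `=_X`-related points agree on every `f ∈ 𝔽(X)`, so preserving the induced
equality already means preserving `=_X`.
-/

/-- `𝔽(X)`: the real-valued functions preserving the relation `r`. -/
def preservingFunctions {X : Type*} (r : X → X → Prop) : Set (X → ℝ) :=
  {f | ∀ x x', r x x' → f x = f x'}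

section PreservingMap

variable {X Y : Type*} {eqX : X → X → Prop} {eqY : Y → Y → Prop} {h : X → Y}

theorem comp_mem_preservingFunctions (hh : ∀ x x', eqX x x' → eqY (h x) (h x'))
    {g : Y → ℝ} (hg : g ∈ preservingFunctions eqY) : g ∘ h ∈ preservingFunctions eqX :=
  fun x x' hx => hg _ _ (hh x x' hx)

theorem map_eq_of_forall_preservingFunctions_eq {G : Set (Y → ℝ)}
    (hG : G ⊆ preservingFunctions eqY) (hG_tight : ∀ y y', (∀ g ∈ G, g y = g y') → eqY y y')
    (hh : ∀ x x', eqX x x' → eqY (h x) (h x')) {x x' : X}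
    (hxx' : ∀ f ∈ preservingFunctions eqX, f x = f x') : eqY (h x) (h x') :=
  hG_tight _ _ fun g hg => hxx' (g ∘ h) (comp_mem_preservingFunctions hh (hG hg))

theorem exists_preservingFunctions_ne_of_map_ne {G : Set (Y → ℝ)}
    (hG : G ⊆ preservingFunctions eqY) (hh : ∀ x x', eqX x x' → eqY (h x) (h x'))
    {x x' : X} (hsep : ∃ g ∈ G, g (h x) ≠ g (h x')) :
    ∃ f ∈ preservingFunctions eqX, f x ≠ f x' := by
  obtain ⟨g, hg, hne⟩ := hsep
  exact ⟨g ∘ h, comp_mem_preservingFunctions hh (hG hg), hne⟩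

end PreservingMap

theorem forall_preservingFunctions_eq {X : Type*} {eqX : X → X → Prop} {x x' : X}
    (hx : eqX x x') : ∀ f ∈ preservingFunctions eqX, f x = f x' :=
  fun _ hf => hf x x' hx

theorem free_adjunction_hom_sets_general {X Y : Type*}
    (eqX : X → X → Prop)
    (FX : Set (X → ℝ))
    (hFX : FX = {f : X → ℝ | ∀ x x', eqX x x' → f x = f x'})
    (eqY : Y → Y → Prop)
    (G : Set (Y → ℝ))
    (hG_pres : ∀ g ∈ G, ∀ y y', eqY y y' → g y = g y')
    (hG_tight : ∀ y y', (∀ g ∈ G, g y = g y') → eqY y y') :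
    ∀ h : X → Y,
      (∀ x x', eqX x x' → eqY (h x) (h x')) ↔
      ((∀ x x', (∀ f ∈ FX, f x = f x') → eqY (h x) (h x')) ∧
       (∀ x x', (∃ g ∈ G, g (h x) ≠ g (h x')) → ∃ f ∈ FX, f x ≠ f x')) := by
  change FX = preservingFunctions eqX at hFX
  subst hFX
  have hG : G ⊆ preservingFunctions eqY := hG_pres
  intro h
  refine ⟨fun hh => ⟨?_, ?_⟩, fun ⟨hind, _⟩ x x' hx => hind x x' (forall_preservingFunctions_eq hx)⟩
  · exact fun x x' => map_eq_of_forall_preservingFunctions_eq hG hG_tight hh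
  · exact fun x x' => exists_preservingFunctions_ne_of_map_ne hG hh

/-- Hom-set identification for the Free ⊣ Forgetful adjunction: a function
h : X → Y into a completely separated set (Y, =_Y, ≠_Y; G) preserves =_X if and only if
it preserves the equality induced by 𝔽(X) and is strongly extensional w.r.t.
≠_{(X,𝔽(X))} and ≠_{(Y,G)}, where 𝔽(X) is the set of ALL =_X-preserving real-valued
functions on X. -/
theorem free_adjunction_hom_sets {X Y : Type*}
    (eqX : X → X → Prop) (eqX_equiv : Equivalence eqX)
    (FX : Set (X → ℝ))
    (hFX : FX = {f : X → ℝ | ∀ x x', eqX x x' → f x = f x'})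
    (eqY neqY : Y → Y → Prop) (eqY_equiv : Equivalence eqY)
    (G : Set (Y → ℝ))
    (hG_pres : ∀ g ∈ G, ∀ y y', eqY y y' → g y = g y')
    (hneqY : ∀ y y', neqY y y' ↔ ∃ g ∈ G, g y ≠ g y')
    (hG_tight : ∀ y y', (∀ g ∈ G, g y = g y') → eqY y y') :
    ∀ h : X → Y,
      (∀ x x', eqX x x' → eqY (h x) (h x')) ↔
      ((∀ x x', (∀ f ∈ FX, f x = f x') → eqY (h x) (h x')) ∧
       (∀ x x', (∃ g ∈ G, g (h x) ≠ g (h x')) → ∃ f ∈ FX, f x ≠ f x')) :=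
  free_adjunction_hom_sets_general eqX FX hFX eqY G hG_pres hG_tight
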